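/- Let B be a bounded linear operator with closed range on a complex Hilbert space H, let H₂ be a closed subspace of H invariant under B, and let H₁ = H₂⊥. Let B' = P₁ ∘ B restricted to H₁ (an operator on H₁), Y = P₂ ∘ B restricted to H₁ (an operator from H₁ to H₂), and Z = B restricted to H₂ (an operator on H₂), where P₁ and P₂ are the orthogonal projections of H onto H₁ and H₂ respectively. Then the closure of R(B'*) is contained in R(B'*) + Y*(N(Z*)). Consequently, if Y*(N(Z*)) ⊆ R(B'*), then R(B'*) is closed, and hence R(B') is closed. -/

import Mathlib

/-!
Since `H₂` is `B`-invariant, `B*` maps `H₂ᗮ` into itself and agrees there with `B'*`, while on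
`H₂` it acts as `Y* + Z*` (with `Y* v ∈ H₂ᗮ`, `Z* v ∈ H₂`). By the closed range theorem `R(B*)`
is closed, so every `x ∈ closure R(B'*)` is some `B* w`. Splitting `w = v + u` along
`H₂ ⊕ H₂ᗮ` gives `x = B'* u + Y* v + Z* v`, and comparing `H₂`-components forces `Z* v = 0`.
For the closed range theorem itself, `T` restricted to `(ker T)ᗮ` is an isomorphism onto the
closed subspace `R(T)`, so its adjoint is onto `(ker T)ᗮ`, and `R(T*) = (ker T)ᗮ`.
-/

open ContinuousLinearMap Submodule
open scoped InnerProductSpace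

section Adjoint

variable {𝕜 E F : Type*} [RCLike 𝕜] [NormedAddCommGroup E] [InnerProductSpace 𝕜 E]
  [CompleteSpace E] [NormedAddCommGroup F] [InnerProductSpace 𝕜 F] [CompleteSpace F]

lemma ContinuousLinearEquiv.adjoint_surjective (e : E ≃L[𝕜] F) :
    Function.Surjective (adjoint (e : E →L[𝕜] F)) := fun x =>
  ⟨adjoint (e.symm : F →L[𝕜] E) x, by
    rw [← comp_apply, ← adjoint_comp, e.coe_symm_comp_coe, adjoint_id, id_apply]⟩

lemma adjoint_surjective_of_injective_of_isClosed_range {T : E →L[𝕜] F}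
    (hinj : Function.Injective T) (hT : IsClosed (Set.range T)) :
    Function.Surjective (adjoint T) := by
  have : CompleteSpace T.range := hT.completeSpace_coe
  have hfactor : T = T.range.subtypeL ∘L (T.equivRange hinj hT : E →L[𝕜] T.range) := rfl
  rw [hfactor, adjoint_comp, adjoint_subtypeL, coe_comp]
  exact (ContinuousLinearEquiv.adjoint_surjective (T.equivRange hinj hT)).comp
    fun v => ⟨v, orthogonalProjectionOnto_mem_subspace_eq_self v⟩

lemma range_adjoint_eq_orthogonal_ker {T : E →L[𝕜] F} (hT : IsClosed (Set.range T)) :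
    Set.range (adjoint T) = (T.kerᗮ : Set E) := by
  set K := T.ker
  set T₀ := T ∘L Kᗮ.subtypeL
  have hinj : Function.Injective T₀ := by
    exact (injective_iff_map_eq_zero T₀).mpr fun p hp =>
      Subtype.ext (disjoint_def.mp K.orthogonal_disjoint p hp p.2)
  have hrange : Set.range T₀ = Set.range T := by
    refine subset_antisymm (fun _ ⟨p, hp⟩ => ⟨p, hp⟩) ?_
    rintro _ ⟨e, rfl⟩
    obtain ⟨k, hk, p, hp, rfl⟩ := K.exists_add_mem_mem_orthogonal e
    exact ⟨⟨p, hp⟩, by simp [T₀, show T k = 0 from hk]⟩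
  have hsub : Set.range (adjoint T) ⊆ Kᗮ := by
    rw [orthogonal_ker]
    exact subset_closure
  refine subset_antisymm hsub fun x hx => ?_
  obtain ⟨y, hy⟩ := adjoint_surjective_of_injective_of_isClosed_range hinj (hrange ▸ hT) ⟨x, hx⟩
  rw [adjoint_comp, adjoint_subtypeL, comp_apply] at hy
  refine ⟨y, ?_⟩
  rw [← starProjection_eq_self_iff.mpr (hsub ⟨y, rfl⟩), starProjection_apply, hy]

lemma isClosed_range_adjoint {T : E →L[𝕜] F} (hT : IsClosed (Set.range T)) :
    IsClosed (Set.range (adjoint T)) := by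
  rw [range_adjoint_eq_orthogonal_ker hT]
  exact T.ker.isClosed_orthogonal

/-- The hypothesis says that `S` is the compression `P_V ∘ T ∘ ι_U`; the conclusion says that
`adjoint S` is then the compression `P_U ∘ adjoint T ∘ ι_V`. -/
lemma adjoint_apply_sub_adjoint_apply_mem_orthogonal {U : Submodule 𝕜 E} {V : Submodule 𝕜 F}
    [CompleteSpace U] [CompleteSpace V] (T : E →L[𝕜] F) (S : U →L[𝕜] V)
    (hS : ∀ u : U, T u - S u ∈ Vᗮ) (v : V) :
    adjoint T v - adjoint S v ∈ Uᗮ := by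
  rw [mem_orthogonal]
  intro u hu
  have hSu : ⟪(u : E), (adjoint S v : E)⟫_𝕜 = ⟪(S ⟨u, hu⟩ : F), v⟫_𝕜 := by
    rw [← U.coe_inner ⟨u, hu⟩, adjoint_inner_right, coe_inner]
  rw [inner_sub_right, hSu, adjoint_inner_right, ← inner_sub_left]
  exact inner_left_of_mem_orthogonal v.2 (hS ⟨u, hu⟩)

end Adjoint

section BlockTriangular

variable {𝕜 H : Type*} [RCLike 𝕜] [NormedAddCommGroup H] [InnerProductSpace 𝕜 H]
  [CompleteSpace H] {B : H →L[𝕜] H} {H₂ : Submodule 𝕜 H} [CompleteSpace H₂]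
  {B' : H₂ᗮ →L[𝕜] H₂ᗮ} {Y : H₂ᗮ →L[𝕜] H₂} {Z : H₂ →L[𝕜] H₂}

lemma adjoint_apply_coe_orthogonal_eq (hinv : ∀ x ∈ H₂, B x ∈ H₂)
    (hB'Y : ∀ x : H₂ᗮ, B x = (B' x : H) + (Y x : H)) (u : H₂ᗮ) :
    adjoint B u = adjoint B' u := by
  have hcomp : adjoint B u - adjoint B' u ∈ H₂ := by
    refine H₂.orthogonal_orthogonal.le
      (adjoint_apply_sub_adjoint_apply_mem_orthogonal B B' (fun x => ?_) u)
    rw [hB'Y, add_sub_cancel_left]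
    exact le_orthogonal_orthogonal H₂ (Y x).2
  have hB : adjoint B u ∈ H₂ᗮ := by
    rw [mem_orthogonal]
    intro y hy
    rw [adjoint_inner_right]
    exact inner_right_of_mem_orthogonal (hinv y hy) u.2
  exact sub_eq_zero.mp
    (disjoint_def.mp H₂.orthogonal_disjoint _ hcomp (H₂ᗮ.sub_mem hB (adjoint B' u).2))

lemma adjoint_apply_coe_eq_add (hB'Y : ∀ x : H₂ᗮ, B x = (B' x : H) + (Y x : H))
    (hZ : ∀ x : H₂, (Z x : H) = B x) (v : H₂) :
    adjoint B v = adjoint Y v + adjoint Z v := by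
  have hY : adjoint B v - adjoint Y v ∈ H₂ := by
    refine H₂.orthogonal_orthogonal.le
      (adjoint_apply_sub_adjoint_apply_mem_orthogonal B Y (fun x => ?_) v)
    rw [hB'Y, add_sub_cancel_right]
    exact (B' x).2
  have hZ' : adjoint B v - adjoint Z v ∈ H₂ᗮ := by
    refine adjoint_apply_sub_adjoint_apply_mem_orthogonal B Z (fun x => ?_) v
    rw [hZ, sub_self]
    exact zero_mem _
  rw [← sub_eq_zero, ← sub_sub]
  refine disjoint_def.mp H₂.orthogonal_disjoint _ (H₂.sub_mem hY (adjoint Z v).2) ?_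
  rw [sub_right_comm]
  exact H₂ᗮ.sub_mem hZ' (adjoint Y v).2

lemma exists_eq_adjoint_add_adjoint_of_coe_mem_range_adjoint (hinv : ∀ x ∈ H₂, B x ∈ H₂)
    (hB'Y : ∀ x : H₂ᗮ, B x = (B' x : H) + (Y x : H)) (hZ : ∀ x : H₂, (Z x : H) = B x)
    {x : H₂ᗮ} (hx : (x : H) ∈ Set.range (adjoint B)) :
    ∃ u v, v ∈ LinearMap.ker (adjoint Z : H₂ →ₗ[𝕜] H₂) ∧ x = adjoint B' u + adjoint Y v := by
  obtain ⟨w, hw⟩ := hx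
  obtain ⟨v, hv, u, hu, rfl⟩ := H₂.exists_add_mem_mem_orthogonal w
  have hsplit : ((x - (adjoint B' ⟨u, hu⟩ + adjoint Y ⟨v, hv⟩) : H₂ᗮ) : H) =
      adjoint Z ⟨v, hv⟩ := by
    rw [AddSubgroupClass.coe_sub, ← hw, map_add, adjoint_apply_coe_eq_add hB'Y hZ ⟨v, hv⟩,
      adjoint_apply_coe_orthogonal_eq hinv hB'Y ⟨u, hu⟩]
    push_cast
    abel
  have hZv : (adjoint Z ⟨v, hv⟩ : H) = 0 :=
    disjoint_def.mp H₂.orthogonal_disjoint _ (adjoint Z _).2 (hsplit ▸ (x - _).2)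
  exact ⟨⟨u, hu⟩, ⟨v, hv⟩, coe_eq_zero.mp hZv,
    sub_eq_zero.mp (coe_eq_zero.mp (hsplit.trans hZv))⟩

lemma exists_eq_adjoint_add_adjoint_of_mem_closure (hBran : IsClosed (Set.range B))
    (hinv : ∀ x ∈ H₂, B x ∈ H₂) (hB'Y : ∀ x : H₂ᗮ, B x = (B' x : H) + (Y x : H))
    (hZ : ∀ x : H₂, (Z x : H) = B x) {x : H₂ᗮ} (hx : x ∈ closure (Set.range (adjoint B'))) :
    ∃ u v, v ∈ LinearMap.ker (adjoint Z : H₂ →ₗ[𝕜] H₂) ∧ x = adjoint B' u + adjoint Y v := by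
  refine exists_eq_adjoint_add_adjoint_of_coe_mem_range_adjoint hinv hB'Y hZ ?_
  rw [← (isClosed_range_adjoint hBran).closure_eq]
  refine map_mem_closure continuous_subtype_val hx ?_
  rintro _ ⟨u, rfl⟩
  exact ⟨u, adjoint_apply_coe_orthogonal_eq hinv hB'Y u⟩

end BlockTriangular

theorem stmt2 {H : Type*} [NormedAddCommGroup H] [InnerProductSpace ℂ H] [CompleteSpace H]
    (B : H →L[ℂ] H) (hBran : IsClosed (Set.range B))
    (H₂ : Submodule ℂ H) [CompleteSpace H₂]
    (hinv : ∀ x ∈ H₂, B x ∈ H₂)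
    (B' : H₂ᗮ →L[ℂ] H₂ᗮ) (Y : H₂ᗮ →L[ℂ] H₂) (Z : H₂ →L[ℂ] H₂)
    (hB'Y : ∀ x : H₂ᗮ, B x = (B' x : H) + (Y x : H))
    (hZ : ∀ x : H₂, (Z x : H) = B x) :
    (∀ x ∈ closure (Set.range (ContinuousLinearMap.adjoint B')),
        ∃ u v, v ∈ LinearMap.ker (ContinuousLinearMap.adjoint Z : H₂ →ₗ[ℂ] H₂) ∧
          x = ContinuousLinearMap.adjoint B' u + ContinuousLinearMap.adjoint Y v) ∧
    ((∀ v ∈ LinearMap.ker (ContinuousLinearMap.adjoint Z : H₂ →ₗ[ℂ] H₂),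
        ContinuousLinearMap.adjoint Y v ∈ LinearMap.range (ContinuousLinearMap.adjoint B' : H₂ᗮ →ₗ[ℂ] H₂ᗮ)) →
      IsClosed (Set.range (ContinuousLinearMap.adjoint B')) ∧ IsClosed (Set.range B')) := by
  have hclosure := fun x (hx : x ∈ closure _) =>
    exists_eq_adjoint_add_adjoint_of_mem_closure hBran hinv hB'Y hZ hx
  refine ⟨hclosure, fun hYker => ?_⟩
  have hB'adj : IsClosed (Set.range (adjoint B')) := by
    refine isClosed_of_closure_subset fun x hx => ?_
    obtain ⟨u, v, hv, rfl⟩ := hclosure x hx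
    obtain ⟨u', hu'⟩ := hYker v hv
    exact ⟨u + u', by rw [map_add]; exact congrArg _ hu'⟩
  exact ⟨hB'adj, adjoint_adjoint B' ▸ isClosed_range_adjoint hB'adj⟩
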